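/- arXiv:1907.06051 — 5 statements merged into one kernel-verified Lean document; each statement's English description precedes it below -/
import Mathlib

section
/- Let G₁ = (V₁,E₁) and G₂ = (V₂,E₂) be two finite d-regular simple graphs with the same number of vertices, and run the same message-passing scheme (same constant initial feature h₀ and same functions AGG_t, MERGE_t) on both graphs. Then for every iteration t ≥ 0 and all vertices v₁ ∈ V₁ and v₂ ∈ V₂, the features coincide: h₁^t(v₁) = h₂^t(v₂). -/
/-!
On a `d`-regular graph every vertex starts with the same feature `h₀`; if all vertices carry
the same feature `c` at iteration `t`, then every neighbor multiset is `d` copies of `c`, so all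
vertices again carry the same feature at iteration `t + 1`. That common feature is produced by a
recursion involving only `d`, `h₀`, `AGG` and `MERGE`, hence it is the same on any two
`d`-regular graphs.
-/

open scoped Classical in
/-- The node features computed by a message-passing scheme (standard GNN) on a finite
simple graph `G`: `h 0 v = h₀` and
`h (t+1) v = MERGE (t+1) (h t v) (AGG (t+1) M_v)`, where `M_v` is the multiset of
features at iteration `t` of the neighbors of `v`. -/
noncomputable def gnnFeat {V α β : Type*} [Fintype V] (G : SimpleGraph V)
    (h₀ : α) (AGG : ℕ → Multiset α → β) (MERGE : ℕ → α → β → α) : ℕ → V → α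
  | 0, _ => h₀
  | t + 1, v =>
      MERGE (t + 1) (gnnFeat G h₀ AGG MERGE t v)
        (AGG (t + 1)
          (((Finset.univ.filter fun u => G.Adj v u)).val.map (gnnFeat G h₀ AGG MERGE t)))

def regularFeat {α β : Type*} (d : ℕ) (h₀ : α) (AGG : ℕ → Multiset α → β)
    (MERGE : ℕ → α → β → α) : ℕ → α
  | 0 => h₀
  | t + 1 => MERGE (t + 1) (regularFeat d h₀ AGG MERGE t)
      (AGG (t + 1) (Multiset.replicate d (regularFeat d h₀ AGG MERGE t)))

theorem SimpleGraph.IsRegularOfDegree.card_filter_adj {V : Type*} [Fintype V]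
    {G : SimpleGraph V} [DecidableRel G.Adj] {d : ℕ} (hG : G.IsRegularOfDegree d) (v : V) :
    (Finset.univ.filter fun u => G.Adj v u).card = d := by
  rw [← G.neighborFinset_eq_filter, G.card_neighborFinset_eq_degree, hG v]

open scoped Classical in
theorem gnnFeat_eq_regularFeat {V α β : Type*} [Fintype V] {G : SimpleGraph V} {d : ℕ}
    (hG : G.IsRegularOfDegree d) (h₀ : α) (AGG : ℕ → Multiset α → β)
    (MERGE : ℕ → α → β → α) (t : ℕ) (v : V) :
    gnnFeat G h₀ AGG MERGE t v = regularFeat d h₀ AGG MERGE t := by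
  induction t generalizing v with
  | zero => rfl
  | succ t ih =>
    have hconst : gnnFeat G h₀ AGG MERGE t = fun _ => regularFeat d h₀ AGG MERGE t :=
      funext ih
    simp only [gnnFeat, regularFeat, hconst, Multiset.map_const', Finset.card_val,
      hG.card_filter_adj]

open scoped Classical in
theorem gnn_same_feature_on_regular_pair_general {V₁ V₂ α β : Type*} [Fintype V₁] [Fintype V₂]
    (G₁ : SimpleGraph V₁) (G₂ : SimpleGraph V₂) (d : ℕ)
    (hreg₁ : G₁.IsRegularOfDegree d) (hreg₂ : G₂.IsRegularOfDegree d)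
    (h₀ : α) (AGG : ℕ → Multiset α → β) (MERGE : ℕ → α → β → α) :
    ∀ (t : ℕ) (v₁ : V₁) (v₂ : V₂),
      gnnFeat G₁ h₀ AGG MERGE t v₁ = gnnFeat G₂ h₀ AGG MERGE t v₂ := fun t v₁ v₂ => by
  rw [gnnFeat_eq_regularFeat hreg₁, gnnFeat_eq_regularFeat hreg₂]

open scoped Classical in
/-- Running the same message-passing scheme on two finite `d`-regular simple graphs with
the same number of vertices produces identical node features at every iteration. -/
theorem gnn_same_feature_on_regular_pair {V₁ V₂ α β : Type*} [Fintype V₁] [Fintype V₂]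
    (G₁ : SimpleGraph V₁) (G₂ : SimpleGraph V₂) (d : ℕ)
    (hcard : Fintype.card V₁ = Fintype.card V₂)
    (hreg₁ : G₁.IsRegularOfDegree d) (hreg₂ : G₂.IsRegularOfDegree d)
    (h₀ : α) (AGG : ℕ → Multiset α → β) (MERGE : ℕ → α → β → α) :
    ∀ (t : ℕ) (v₁ : V₁) (v₂ : V₂),
      gnnFeat G₁ h₀ AGG MERGE t v₁ = gnnFeat G₂ h₀ AGG MERGE t v₂ :=
  gnn_same_feature_on_regular_pair_general G₁ G₂ d hreg₁ hreg₂ h₀ AGG MERGE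
end

section
/- Let G₁ = (V₁,E₁) and G₂ = (V₂,E₂) be two finite d-regular simple graphs with the same number of vertices, run the same message-passing scheme on both graphs for T iterations, and let READOUT : Multiset α → γ be any function. Then the graph-level representations coincide: READOUT of the multiset {h₁^T(v) : v ∈ V₁} equals READOUT of the multiset {h₂^T(v) : v ∈ V₂}. -/
section Regular

variable {α β : Type*} (d : ℕ) (h₀ : α) (AGG : ℕ → Multiset α → β)
  (MERGE : ℕ → α → β → α)

def gnnRegularFeat : ℕ → α
  | 0 => h₀
  | t + 1 =>
      MERGE (t + 1) (gnnRegularFeat t)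
        (AGG (t + 1) (Multiset.replicate d (gnnRegularFeat t)))

variable {V : Type*} [Fintype V] {G : SimpleGraph V} [G.LocallyFinite] {d}

theorem gnnFeat_succ (t : ℕ) (v : V) :
    gnnFeat G h₀ AGG MERGE (t + 1) v = MERGE (t + 1) (gnnFeat G h₀ AGG MERGE t v)
      (AGG (t + 1) ((G.neighborFinset v).val.map (gnnFeat G h₀ AGG MERGE t))) := by
  rw [gnnFeat]
  congr 4
  ext
  simp

theorem gnnFeat_eq_gnnRegularFeat (hreg : G.IsRegularOfDegree d) (t : ℕ) (v : V) :
    gnnFeat G h₀ AGG MERGE t v = gnnRegularFeat d h₀ AGG MERGE t := by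
  induction t generalizing v with
  | zero => rfl
  | succ t ih =>
    rw [gnnFeat_succ, gnnRegularFeat, ih v, Multiset.map_congr rfl fun u _ => ih u,
      Multiset.map_const', Finset.card_val, SimpleGraph.card_neighborFinset_eq_degree, hreg v]

theorem map_gnnFeat_univ_eq_replicate (hreg : G.IsRegularOfDegree d) (t : ℕ) :
    (Finset.univ : Finset V).val.map (gnnFeat G h₀ AGG MERGE t)
      = Multiset.replicate (Fintype.card V) (gnnRegularFeat d h₀ AGG MERGE t) := by
  rw [Multiset.map_congr rfl fun v _ => gnnFeat_eq_gnnRegularFeat h₀ AGG MERGE hreg t v,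
    Multiset.map_const', Finset.card_val, Finset.card_univ]

end Regular

open scoped Classical in
/-- Running the same message-passing scheme for `T` iterations on two finite `d`-regular
simple graphs with the same number of vertices, any readout function applied to the
multiset of final node features yields the same graph-level representation. -/
theorem gnn_same_readout_on_regular_pair {V₁ V₂ α β γ : Type*} [Fintype V₁] [Fintype V₂]
    (G₁ : SimpleGraph V₁) (G₂ : SimpleGraph V₂) (d : ℕ)
    (hcard : Fintype.card V₁ = Fintype.card V₂)
    (hreg₁ : G₁.IsRegularOfDegree d) (hreg₂ : G₂.IsRegularOfDegree d)
    (h₀ : α) (AGG : ℕ → Multiset α → β) (MERGE : ℕ → α → β → α)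
    (T : ℕ) (READOUT : Multiset α → γ) :
    READOUT ((Finset.univ : Finset V₁).val.map (gnnFeat G₁ h₀ AGG MERGE T)) =
      READOUT ((Finset.univ : Finset V₂).val.map (gnnFeat G₂ h₀ AGG MERGE T)) := by
  rw [map_gnnFeat_univ_eq_replicate h₀ AGG MERGE hreg₁,
    map_gnnFeat_univ_eq_replicate h₀ AGG MERGE hreg₂, hcard]
end

section
/- Let 𝒳 be a countable type and let N ∈ ℕ with N ≥ 1. Then there exists a function f' : 𝒳 → ℝ with f'(x) > 0 for all x, such that for every multiset S over 𝒳 of cardinality less than N the sum Σ_{x ∈ S} f'(x) is strictly less than 1, and the map S ↦ Σ_{x ∈ S} f'(x) is injective on the collection of multisets over 𝒳 of cardinality less than N. -/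
/-!
Enumerate `𝒳` injectively by `e : 𝒳 → ℕ` and weight `x` by `r ^ (e x + 1)` with
`r = 1 / (N + 1)`. Since `N * r ≤ 1`, fewer than `N` powers of `r` with exponents above `m`
sum to less than `r ^ m`. Hence the smallest exponent occurring in one of two multisets with
equal sums also occurs in the other; cancelling it and recursing shows the multisets agree.
-/

open Multiset

section GeometricWeights

variable {K : Type*} [Semiring K] [LinearOrder K] [IsStrictOrderedRing K] {r : K} {N : ℕ}

theorem sum_map_pow_lt_pow (hr : 0 < r) (hNr : N * r ≤ 1) {A : Multiset ℕ} {m : ℕ}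
    (hA : card A < N) (hm : ∀ a ∈ A, m < a) : (A.map (r ^ ·)).sum < r ^ m := by
  have hr1 : r ≤ 1 :=
    (le_mul_of_one_le_left hr.le (by exact_mod_cast (Nat.zero_le _).trans_lt hA)).trans hNr
  calc (A.map (r ^ ·)).sum
      ≤ card A • r ^ (m + 1) := by
        simpa using sum_le_card_nsmul (A.map (r ^ ·)) (r ^ (m + 1)) (by
          simpa using fun a ha => pow_le_pow_of_le_one hr.le hr1 (hm a ha))
    _ < N * r ^ (m + 1) := by
        rw [nsmul_eq_mul]
        exact mul_lt_mul_of_pos_right (by exact_mod_cast hA) (pow_pos hr _)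
    _ = (N * r) * r ^ m := by rw [pow_succ', mul_assoc]
    _ ≤ r ^ m := mul_le_of_le_one_left (pow_pos hr _).le hNr

theorem pow_le_sum_map_pow (hr : 0 ≤ r) {B : Multiset ℕ} {m : ℕ} (hm : m ∈ B) :
    r ^ m ≤ (B.map (r ^ ·)).sum :=
  single_le_sum (by simpa using fun _ _ => pow_nonneg hr _) _ (mem_map_of_mem _ hm)

theorem mem_of_sum_map_pow_eq_of_forall_le (hr : 0 < r) (hNr : N * r ≤ 1) {A B : Multiset ℕ}
    {m : ℕ} (hA : card A < N) (h : (A.map (r ^ ·)).sum = (B.map (r ^ ·)).sum)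
    (hmA : ∀ a ∈ A, m ≤ a) (hmB : m ∈ B) : m ∈ A := by
  by_contra hm
  refine (sum_map_pow_lt_pow hr hNr hA fun a ha => ?_).not_ge (h ▸ pow_le_sum_map_pow hr.le hmB)
  exact (hmA a ha).lt_of_ne (ne_of_mem_of_not_mem ha hm).symm

theorem eq_of_sum_map_pow_eq (hr : 0 < r) (hNr : N * r ≤ 1) {A B : Multiset ℕ}
    (hA : card A < N) (hB : card B < N) (h : (A.map (r ^ ·)).sum = (B.map (r ^ ·)).sum) :
    A = B := by
  rcases eq_or_ne (A + B) 0 with hAB | hAB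
  · obtain ⟨rfl, rfl⟩ := add_eq_zero.mp hAB
    rfl
  obtain ⟨m, hmAB, hmin⟩ := exists_min_image id hAB
  have hmA : m ∈ A := (mem_add.1 hmAB).elim id <|
    mem_of_sum_map_pow_eq_of_forall_le hr hNr hA h fun a ha => hmin a (mem_add.2 (.inl ha))
  have hmB : m ∈ B :=
    mem_of_sum_map_pow_eq_of_forall_le hr hNr hB h.symm (fun b hb => hmin b (mem_add.2 (.inr hb)))
      hmA
  rw [← cons_erase hmA, ← cons_erase hmB] at h ⊢
  simp only [map_cons, sum_cons, add_right_inj] at h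
  rw [eq_of_sum_map_pow_eq hr hNr ((card_erase_lt_of_mem hmA).trans hA)
    ((card_erase_lt_of_mem hmB).trans hB) h]
termination_by card A + card B
decreasing_by exact add_lt_add (card_erase_lt_of_mem hmA) (card_erase_lt_of_mem hmB)

end GeometricWeights

theorem exists_injective_multiset_sum_general {𝒳 : Type*} [Countable 𝒳] (N : ℕ) :
    ∃ f' : 𝒳 → ℝ,
      (∀ x, 0 < f' x) ∧
      (∀ S : Multiset 𝒳, Multiset.card S < N → (S.map f').sum < 1) ∧
      (∀ S T : Multiset 𝒳, Multiset.card S < N → Multiset.card T < N →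
        (S.map f').sum = (T.map f').sum → S = T) := by
  obtain ⟨e, he⟩ := exists_injective_nat 𝒳
  set r : ℝ := ((N : ℝ) + 1)⁻¹
  have hr : 0 < r := by positivity
  have hNr : N * r ≤ 1 := by
    rw [← div_eq_mul_inv, div_le_one (by positivity)]
    linarith
  have sum_eq (S : Multiset 𝒳) :
      (S.map fun x => r ^ (e x + 1)).sum = ((S.map (e · + 1)).map (r ^ ·)).sum := by
    rw [map_map]
    rfl
  refine ⟨fun x => r ^ (e x + 1), fun x => pow_pos hr _, fun S hS => ?_, fun S T hS hT h => ?_⟩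
  · rw [sum_eq, ← pow_zero r]
    exact sum_map_pow_lt_pow hr hNr (by simpa using hS) (by simp)
  · rw [sum_eq, sum_eq] at h
    exact map_injective (fun _ _ h => he (Nat.succ_injective h))
      (eq_of_sum_map_pow_eq hr hNr (by simpa using hS) (by simpa using hT) h)

/-- For a countable type `𝒳` and `N ≥ 1`, there is a positive function `f' : 𝒳 → ℝ` such
that the sum of `f'` over any multiset of cardinality less than `N` is strictly less than
`1`, and this sum determines the multiset uniquely among multisets of cardinality less
than `N`. -/
theorem exists_injective_multiset_sum {𝒳 : Type*} [Countable 𝒳] (N : ℕ) (hN : 1 ≤ N) :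
    ∃ f' : 𝒳 → ℝ,
      (∀ x, 0 < f' x) ∧
      (∀ S : Multiset 𝒳, Multiset.card S < N → (S.map f').sum < 1) ∧
      (∀ S T : Multiset 𝒳, Multiset.card S < N → Multiset.card T < N →
        (S.map f').sum = (T.map f').sum → S = T) :=
  exists_injective_multiset_sum_general N
end

section
/- Let 𝒳 be a countable type and let N, r ∈ ℕ with N ≥ 1. Then there exist functions f_i : 𝒳 → ℝ for each i ∈ {0, 1, …, r} and a function f' : 𝒳 → ℝ such that the map sending a triple (i, c, S), with i ∈ {0, …, r}, c ∈ 𝒳, and S a multiset over 𝒳 of cardinality less than N, to the real number f_i(c) + Σ_{x ∈ S} f'(x) is injective on the set of all such triples. -/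
/-!
Inject `(Fin (r + 1) × 𝒳) ⊕ 𝒳` into `ℕ` by `e` and put `f i c = B ^ e (inl (i, c))`,
`f' x = B ^ e (inr x)` with `B = N + 1`. Then `f i c + Σ_{x ∈ S} f' x` is the base-`B` number
whose digits are the multiplicities of the multiset `inl (i, c) ::ₘ S.map inr`. These are at most
`card S + 1 ≤ N < B`, so uniqueness of base-`B` expansions recovers the multiset, and with it
`(i, c)` and `S`.
-/

theorem Nat.ofDigits_map_range (b : ℕ) (f : ℕ → ℕ) (k : ℕ) :
    Nat.ofDigits b ((List.range k).map f) = ∑ n ∈ Finset.range k, f n * b ^ n := by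
  induction k with
  | zero => simp
  | succ k ih =>
    rw [List.range_succ, List.map_append, Nat.ofDigits_append, ih, Finset.sum_range_succ]
    simp [mul_comm]

namespace Multiset

theorem sum_map_pow_eq_sum_range_count (b : ℕ) {s : Multiset ℕ} {k : ℕ} (hk : ∀ n ∈ s, n < k) :
    (s.map (b ^ ·)).sum = ∑ n ∈ Finset.range k, s.count n * b ^ n := by
  rw [Finset.sum_multiset_map_count]
  simp only [smul_eq_mul]
  refine Finset.sum_subset (fun n hn => Finset.mem_range.2 (hk n (mem_toFinset.1 hn))) ?_
  intro n _ hn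
  simp [count_eq_zero_of_notMem (mt mem_toFinset.2 hn)]

theorem eq_of_sum_map_pow_eq {b : ℕ} (hb : 1 < b) {s t : Multiset ℕ}
    (hs : ∀ n, s.count n < b) (ht : ∀ n, t.count n < b)
    (h : (s.map (b ^ ·)).sum = (t.map (b ^ ·)).sum) : s = t := by
  obtain ⟨k, hk⟩ : ∃ k, ∀ n ∈ s + t, n < k :=
    ⟨(s + t).sup + 1, fun n hn => Nat.lt_succ_of_le (le_sup hn)⟩
  have hdigits : (List.range k).map s.count = (List.range k).map t.count := by
    refine Nat.ofDigits_inj_of_len_eq hb (by simp) (by simp [hs]) (by simp [ht]) ?_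
    rwa [Nat.ofDigits_map_range, Nat.ofDigits_map_range,
      ← sum_map_pow_eq_sum_range_count b (fun n hn => hk n (mem_add.2 (.inl hn))),
      ← sum_map_pow_eq_sum_range_count b (fun n hn => hk n (mem_add.2 (.inr hn)))]
  ext n
  by_cases hn : n < k
  · exact List.map_inj_left.1 hdigits n (List.mem_range.2 hn)
  · rw [count_eq_zero_of_notMem fun h => hn (hk n (mem_add.2 (.inl h))),
      count_eq_zero_of_notMem fun h => hn (hk n (mem_add.2 (.inr h)))]

theorem inl_cons_map_inr_inj {α β : Type*} {a b : α} {S T : Multiset β} :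
    Sum.inl a ::ₘ S.map Sum.inr = Sum.inl b ::ₘ T.map Sum.inr ↔ a = b ∧ S = T := by
  refine ⟨fun h => ?_, by rintro ⟨rfl, rfl⟩; rfl⟩
  have ha : Sum.inl a ∈ Sum.inl b ::ₘ T.map Sum.inr := h ▸ mem_cons_self _ _
  obtain rfl : a = b := by simpa using ha
  exact ⟨rfl, map_injective Sum.inr_injective ((cons_inj_right _).1 h)⟩

end Multiset

/-- For a countable type `𝒳`, `N ≥ 1` and `r ∈ ℕ`, there are functions
`f i : 𝒳 → ℝ` for `i ∈ {0, …, r}` and `f' : 𝒳 → ℝ` such that the map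
`(i, c, S) ↦ f i c + Σ_{x ∈ S} f' x` is injective on triples of an index
`i ∈ {0, …, r}`, an element `c ∈ 𝒳`, and a multiset `S` over `𝒳` of cardinality
less than `N`. -/
theorem exists_injective_indexed_pair_encoding {𝒳 : Type*} [Countable 𝒳]
    (N r : ℕ) (hN : 1 ≤ N) :
    ∃ (f : Fin (r + 1) → 𝒳 → ℝ) (f' : 𝒳 → ℝ),
      ∀ (i j : Fin (r + 1)) (c c' : 𝒳) (S T : Multiset 𝒳),
        Multiset.card S < N → Multiset.card T < N →
        f i c + (S.map f').sum = f j c' + (T.map f').sum →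
        i = j ∧ c = c' ∧ S = T := by
  obtain ⟨e, he⟩ := Countable.exists_injective_nat (Fin (r + 1) × 𝒳 ⊕ 𝒳)
  let code (a : Fin (r + 1) × 𝒳) (S : Multiset 𝒳) : Multiset ℕ :=
    (Sum.inl a ::ₘ S.map Sum.inr).map e
  have code_sum (a S) : ((((code a S).map ((N + 1) ^ ·)).sum : ℕ) : ℝ) =
      (N + 1 : ℝ) ^ e (.inl a) + (S.map fun x => (N + 1 : ℝ) ^ e (.inr x)).sum := by
    simp [code, Multiset.map_map, Nat.cast_multiset_sum]
  have code_count (a S) (hS : Multiset.card S < N) (n : ℕ) : (code a S).count n < N + 1 :=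
    calc (code a S).count n ≤ Multiset.card (code a S) := Multiset.count_le_card n _
      _ < N + 1 := by simpa [code] using hS
  refine ⟨fun i c => (N + 1 : ℝ) ^ e (.inl (i, c)), fun x => (N + 1 : ℝ) ^ e (.inr x), ?_⟩
  intro i j c c' S T hS hT h
  have hcode : code (i, c) S = code (j, c') T := by
    refine Multiset.eq_of_sum_map_pow_eq (by omega) (code_count _ S hS) (code_count _ T hT) ?_
    exact_mod_cast (code_sum _ S).trans (h.trans (code_sum _ T).symm)
  obtain ⟨hic, rfl⟩ := Multiset.inl_cons_map_inr_inj.1 (Multiset.map_injective he hcode)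
  obtain ⟨rfl, rfl⟩ := Prod.ext_iff.1 hic
  exact ⟨rfl, rfl, rfl⟩
end

section
/- Let G be a simple graph, v a vertex of G, and k ∈ ℕ, and let H = G_v^k be the subgraph of G induced by the set of vertices at shortest-path distance at most k from v (including v itself). Then H contains a cycle of odd length if and only if there exist vertices u and w adjacent in G with dist(v,u) = dist(v,w) ≤ k. -/
/-!
If two adjacent vertices `u`, `w` lie at the same distance `d ≤ k` from `v`, two geodesics from
`v` together with the edge `uw` form a closed walk of length `2d + 1` inside the `k`-hop
neighborhood, and any odd closed walk contains an odd cycle. Conversely, if no edge of the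
neighborhood joins equidistant vertices, then distances from `v` change by exactly one along every
edge, so their parity is a proper 2-coloring and every closed walk there has even length.
-/

namespace SimpleGraph

variable {V : Type*} {G : SimpleGraph V}

namespace Walk

@[simp]
theorem length_induce (s : Set V) {u v : V} (p : G.Walk u v) (hp : ∀ x ∈ p.support, x ∈ s) :
    (p.induce s hp).length = p.length := by
  have h := congrArg length (map_induce p hp)
  rwa [length_map] at h

theorem dist_le_length_of_mem_support {u v z : V} (p : G.Walk u v) (hz : z ∈ p.support) :
    G.dist u z ≤ p.length := by
  classical
  exact (dist_le _).trans (p.length_takeUntil_le_length hz)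

/-- Induction on `p`: prepending an edge `uw` to a path `q` from `w` to `v` either gives a path,
or closes the cycle `uw ++ (q up to u)`, in which case the rest of `q` is a path from `u` to `v`.
One of the two has the required parity. -/
theorem exists_odd_isCycle_or_exists_isPath_even_length_add {u v : V} (p : G.Walk u v) :
    (∃ (x : V) (c : G.Walk x x), c.IsCycle ∧ Odd c.length) ∨
      ∃ q : G.Walk u v, q.IsPath ∧ Even (q.length + p.length) := by
  classical
  induction p with
  | nil => exact .inr ⟨nil, .nil, by simp⟩
  | @cons u w v huw p ih =>
    obtain hcycle | ⟨q, hq, hqp⟩ := ih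
    · exact .inl hcycle
    by_cases hu : u ∈ q.support
    swap
    · exact .inr ⟨cons huw q, hq.cons hu, by grind [length_cons]⟩
    have hsplit := congrArg length (q.take_spec hu)
    rw [length_append] at hsplit
    set q₁ := q.takeUntil u hu
    set q₂ := q.dropUntil u hu
    by_cases hodd : Odd (cons huw q₁).length
    · refine .inl ⟨u, cons huw q₁, (cons_isCycle_iff _ _).mpr ⟨hq.takeUntil hu, fun he => ?_⟩, hodd⟩
      have h1 : q₁.length = 1 := (hq.takeUntil hu).length_eq_one_of_mem_edges (Sym2.eq_swap ▸ he)
      simp [h1, Nat.odd_iff] at hodd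
    · refine .inr ⟨q₂, hq.dropUntil hu, ?_⟩
      rw [length_cons, Nat.not_odd_iff_even] at hodd
      rw [length_cons]
      grind [Nat.even_add_one]

theorem exists_odd_isCycle_of_odd_length {x : V} (c : G.Walk x x) (hc : Odd c.length) :
    ∃ (y : V) (c' : G.Walk y y), c'.IsCycle ∧ Odd c'.length := by
  obtain hcycle | ⟨q, hq, hqc⟩ := c.exists_odd_isCycle_or_exists_isPath_even_length_add
  · exact hcycle
  · have hq0 : q = nil := congrArg Subtype.val (Path.loop_eq ⟨q, hq⟩)
    subst hq0
    exact absurd (by simpa using hqc) (Nat.not_even_iff_odd.mpr hc)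

theorem even_length_of_forall_adj_odd_add {f : V → ℕ} (hf : ∀ a b, G.Adj a b → Odd (f a + f b))
    {x : V} (c : G.Walk x x) : Even c.length :=
  let parity : G.Coloring Bool :=
    Coloring.mk (fun a => decide (Even (f a))) fun hab => by
      have hodd := hf _ _ hab
      simp only [Nat.odd_add, ← Nat.not_odd_iff_even] at hodd
      simp only [ne_eq, decide_eq_decide, ← Nat.not_odd_iff_even]
      tauto
  (parity.even_length_iff_congr c).mpr Iff.rfl

end Walk

theorem Adj.odd_dist_add_dist_of_ne {v a b : V} (hab : G.Adj a b)
    (hne : G.dist v a ≠ G.dist v b) : Odd (G.dist v a + G.dist v b) := by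
  rcases hab.diff_dist_adj (u := v) with h | h | h <;> grind

theorem exists_closed_walk_length_of_adj_dist_eq {v u w : V} (huw : G.Adj u w)
    (hu : G.Reachable v u) (hw : G.Reachable v w) (hd : G.dist v u = G.dist v w) :
    ∃ c : G.Walk v v, c.length = 2 * G.dist v u + 1 ∧
      ∀ z ∈ c.support, G.Reachable v z ∧ G.dist v z ≤ G.dist v u := by
  classical
  obtain ⟨p, hp⟩ := hu.exists_walk_length_eq_dist
  obtain ⟨q, hq⟩ := hw.exists_walk_length_eq_dist
  refine ⟨p.append (.cons huw q.reverse), by simp [hp, hq, hd]; ring, fun z hz => ?_⟩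
  rw [Walk.mem_support_append_iff, Walk.support_cons, List.mem_cons, Walk.support_reverse,
    List.mem_reverse] at hz
  rcases hz with hz | rfl | hz
  · exact ⟨⟨p.takeUntil z hz⟩, hp ▸ p.dist_le_length_of_mem_support hz⟩
  · exact ⟨hu, le_rfl⟩
  · exact ⟨⟨q.takeUntil z hz⟩, hd ▸ hq ▸ q.dist_le_length_of_mem_support hz⟩

theorem setOf_reachable_dist_le_union_singleton (v : V) (k : ℕ) :
    {u | G.Reachable v u ∧ G.dist v u ≤ k} ∪ {v} = {u | G.Reachable v u ∧ G.dist v u ≤ k} :=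
  Set.union_eq_self_of_subset_right (by simp)

end SimpleGraph

open SimpleGraph

/-- The `k`-hop neighborhood subgraph of a vertex `v` (the subgraph induced by the
vertices at shortest-path distance at most `k` from `v`, including `v` itself) contains a
cycle of odd length if and only if there are vertices `u` and `w` adjacent in `G` with
`dist v u = dist v w ≤ k`. -/
theorem odd_cycle_in_khop_iff_adj_dist_eq {V : Type*} (G : SimpleGraph V) (v : V) (k : ℕ)
    (s : Set V) (hs : s = {u | G.Reachable v u ∧ G.dist v u ≤ k} ∪ {v}) :
    (∃ (x : s) (c : (G.induce s).Walk x x), c.IsCycle ∧ Odd c.length) ↔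
      (∃ u w : V, G.Adj u w ∧ G.Reachable v u ∧ G.Reachable v w ∧
        G.dist v u = G.dist v w ∧ G.dist v u ≤ k) := by
  rw [setOf_reachable_dist_le_union_singleton] at hs
  subst hs
  constructor
  · rintro ⟨x, c, -, hodd⟩
    by_contra! hne
    refine Nat.not_even_iff_odd.mpr hodd
      (c.even_length_of_forall_adj_odd_add (f := fun z => G.dist v z.1) ?_)
    rintro ⟨a, hva, hak⟩ ⟨b, hvb, -⟩ (hab : G.Adj a b)
    exact hab.odd_dist_add_dist_of_ne fun hd => (hne a b hab hva hvb hd).not_ge hak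
  · rintro ⟨u, w, huw, hvu, hvw, hd, hdk⟩
    obtain ⟨c, hlen, hsupp⟩ := exists_closed_walk_length_of_adj_dist_eq huw hvu hvw hd
    have hc : ∀ z ∈ c.support, z ∈ {u | G.Reachable v u ∧ G.dist v u ≤ k} := fun z hz =>
      ⟨(hsupp z hz).1, (hsupp z hz).2.trans hdk⟩
    exact (c.induce _ hc).exists_odd_isCycle_of_odd_length (by simp [hlen])
end
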